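/- arXiv:2411.19890 — 4 statements merged into one kernel-verified Lean document; each statement's English description precedes it below -/
import Mathlib

section
/- Let N : M_{d_A}(ℂ) → M_{d_B}(ℂ) be a quantum channel with d_A ≥ d_B that is not purity-preserving, i.e. there exists a unit vector φ ∈ ℂ^{d_A} such that N(|φ⟩⟨φ|) has rank at least 2. Then there exist an orthogonal projection P ∈ M_{d_A}(ℂ) with 1 ≤ rank(P) ≤ d_A − 1 and a unit vector ψ ∈ ℂ^{d_A} with Pψ = 0 such that the support (column space) of N(P) equals the support of N(P + |ψ⟩⟨ψ|). -/
open scoped Matrix ENNReal ComplexOrder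

noncomputable section

namespace RDPI

/-- A density matrix: positive semidefinite with trace one. -/
def IsDensity {d : ℕ} (ρ : Matrix (Fin d) (Fin d) ℂ) : Prop :=
  ρ.PosSemidef ∧ ρ.trace = 1

/-- The support (column space / range) of a matrix. -/
def supp {d : ℕ} (ρ : Matrix (Fin d) (Fin d) ℂ) : Submodule ℂ (Fin d → ℂ) :=
  LinearMap.range ρ.mulVecLin

/-- The Choi matrix `∑ᵢⱼ Eᵢⱼ ⊗ N(Eᵢⱼ)` of a linear map between matrix algebras. -/
def choi {dA dB : ℕ} (N : Matrix (Fin dA) (Fin dA) ℂ →ₗ[ℂ] Matrix (Fin dB) (Fin dB) ℂ) :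
    Matrix (Fin dA × Fin dB) (Fin dA × Fin dB) ℂ :=
  fun p q => N (Matrix.single p.1 q.1 1) p.2 q.2

/-- A quantum channel: completely positive (PSD Choi matrix) and trace preserving. -/
def IsQChannel {dA dB : ℕ}
    (N : Matrix (Fin dA) (Fin dA) ℂ →ₗ[ℂ] Matrix (Fin dB) (Fin dB) ℂ) : Prop :=
  (choi N).PosSemidef ∧ ∀ ρ, (N ρ).trace = ρ.trace

/-- Functional-calculus logarithm of a Hermitian matrix, taken on its support
(recall `Real.log 0 = 0`). Junk value `0` for non-Hermitian inputs. -/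
def matLog {d : ℕ} (A : Matrix (Fin d) (Fin d) ℂ) : Matrix (Fin d) (Fin d) ℂ :=
  if hA : A.IsHermitian then
    (hA.eigenvectorUnitary : Matrix (Fin d) (Fin d) ℂ) *
      Matrix.diagonal (fun i => (Real.log (hA.eigenvalues i) : ℂ)) *
      star (hA.eigenvectorUnitary : Matrix (Fin d) (Fin d) ℂ)
  else 0

open scoped Classical in
/-- Quantum relative entropy `D(ρ‖σ)`, valued in `[0,∞]`. -/
def relEnt {d : ℕ} (ρ σ : Matrix (Fin d) (Fin d) ℂ) : ℝ≥0∞ :=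
  if supp ρ ≤ supp σ then ENNReal.ofReal ((ρ * (matLog ρ - matLog σ)).trace.re) else ⊤

/-- The BKM metric `g_σ(X) = ∫₀^∞ Tr(X† (σ+r)⁻¹ X (σ+r)⁻¹) dr`, valued in `[0,∞]`. -/
def bkm {d : ℕ} (σ X : Matrix (Fin d) (Fin d) ℂ) : ℝ≥0∞ :=
  ∫⁻ r in Set.Ioi (0 : ℝ),
    ENNReal.ofReal ((Xᴴ * (σ + (r : ℂ) • 1)⁻¹ * X * (σ + (r : ℂ) • 1)⁻¹).trace.re)

/-! Extend `φ` to an orthonormal basis `u₀ = φ, u₁, …` and let `P_k` project onto the span of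
the first `k` vectors. Complete positivity makes every `N(P_k)` positive semidefinite, so the
supports of `N(P_k)` increase with `k`. The support of `N(P_1) = N(|φ⟩⟨φ|)` already has
dimension at least `2` and all supports lie in `ℂ^{d_B}` with `d_B ≤ d_A`, so the `d_A - 1`
inclusions `supp N(P_k) ≤ supp N(P_{k+1})`, `1 ≤ k < d_A`, cannot all be strict; at a step
where equality holds take `P = P_k` and `ψ = u_k`. -/

end RDPI

open Matrix

namespace Matrix

section PosSemidef

variable {𝕜 n : Type*} [RCLike 𝕜] [Fintype n]

theorem PosSemidef.ker_add_le_left {A B : Matrix n n 𝕜}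
    (hA : A.PosSemidef) (hB : B.PosSemidef) :
    LinearMap.ker (A + B).mulVecLin ≤ LinearMap.ker A.mulVecLin := by
  intro x hx
  have hx : star x ⬝ᵥ A *ᵥ x + star x ⬝ᵥ B *ᵥ x = 0 := by
    rw [← dotProduct_add, ← add_mulVec, show (A + B) *ᵥ x = 0 from hx, dotProduct_zero]
  have hsum := add_eq_zero_iff_of_nonneg (hA.dotProduct_mulVec_nonneg x)
    (hB.dotProduct_mulVec_nonneg x)
  exact (hA.dotProduct_mulVec_zero_iff x).mp (hsum.mp hx).1

variable [DecidableEq n]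

theorem IsHermitian.range_toEuclideanLin {A : Matrix n n 𝕜} (hA : A.IsHermitian) :
    LinearMap.range (toEuclideanLin A) = (LinearMap.ker (toEuclideanLin A))ᗮ := by
  rw [LinearMap.orthogonal_ker, ← toEuclideanLin_conjTranspose_eq_adjoint, hA.eq]

theorem IsHermitian.range_mulVecLin_le_of_ker_le {A B : Matrix n n 𝕜}
    (hA : A.IsHermitian) (hB : B.IsHermitian)
    (h : LinearMap.ker B.mulVecLin ≤ LinearMap.ker A.mulVecLin) :
    LinearMap.range A.mulVecLin ≤ LinearMap.range B.mulVecLin := by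
  have hker : LinearMap.ker (toEuclideanLin B) ≤ LinearMap.ker (toEuclideanLin A) :=
    fun z hz => congrArg (WithLp.toLp 2) (h (congrArg WithLp.ofLp hz) : A *ᵥ z.ofLp = 0)
  rintro _ ⟨x, rfl⟩
  have hx : WithLp.toLp 2 (A *ᵥ x) ∈ LinearMap.range (toEuclideanLin B) := by
    rw [IsHermitian.range_toEuclideanLin hB]
    refine Submodule.orthogonal_le hker ?_
    rw [← IsHermitian.range_toEuclideanLin hA]
    exact ⟨WithLp.toLp 2 x, rfl⟩
  obtain ⟨y, hy⟩ := hx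
  exact ⟨y.ofLp, congrArg WithLp.ofLp hy⟩

theorem PosSemidef.range_mulVecLin_le_add {A B : Matrix n n 𝕜}
    (hA : A.PosSemidef) (hB : B.PosSemidef) :
    LinearMap.range A.mulVecLin ≤ LinearMap.range (A + B).mulVecLin :=
  IsHermitian.range_mulVecLin_le_of_ker_le hA.isHermitian (hA.add hB).isHermitian
    (hA.ker_add_le_left hB)

end PosSemidef

section OrthoProj

variable {𝕜 n ι : Type*} [Field 𝕜] [StarRing 𝕜]

def orthoProj (u : ι → n → 𝕜) (s : Finset ι) : Matrix n n 𝕜 :=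
  ∑ i ∈ s, vecMulVec (u i) (star (u i))

theorem conjTranspose_orthoProj (u : ι → n → 𝕜) (s : Finset ι) :
    (orthoProj u s)ᴴ = orthoProj u s := by
  simp [orthoProj, conjTranspose_sum]

variable [DecidableEq ι]

theorem orthoProj_insert (u : ι → n → 𝕜) {s : Finset ι} {j : ι} (hj : j ∉ s) :
    orthoProj u (insert j s) = orthoProj u s + vecMulVec (u j) (star (u j)) := by
  rw [orthoProj, Finset.sum_insert hj, add_comm, orthoProj]

variable [Fintype n] {u : ι → n → 𝕜}
  (hu : ∀ i j, star (u i) ⬝ᵥ u j = if i = j then 1 else 0)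
include hu

theorem orthoProj_mulVec (s : Finset ι) (j : ι) :
    orthoProj u s *ᵥ u j = if j ∈ s then u j else 0 := by
  simp [orthoProj, sum_mulVec, vecMulVec_mulVec, hu, ite_smul, Finset.sum_ite_eq']

theorem orthoProj_mul_self (s : Finset ι) : orthoProj u s * orthoProj u s = orthoProj u s := by
  rw [orthoProj, Finset.mul_sum]
  refine Finset.sum_congr rfl fun i hi => ?_
  rw [mul_vecMulVec, ← orthoProj, orthoProj_mulVec hu, if_pos hi]

theorem linearIndependent_of_orthonormal : LinearIndependent 𝕜 u := by
  refine linearIndependent_iff'.mpr fun s c hc i hi => ?_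
  have := congrArg (star (u i) ⬝ᵥ ·) hc
  simpa [dotProduct_sum, dotProduct_smul, hu, hi] using this

theorem range_orthoProj (s : Finset ι) :
    LinearMap.range (orthoProj u s).mulVecLin = Submodule.span 𝕜 (u '' s) := by
  apply le_antisymm
  · rintro _ ⟨x, rfl⟩
    simp only [mulVecLin_apply, orthoProj, sum_mulVec, vecMulVec_mulVec, op_smul_eq_smul]
    exact Submodule.sum_mem _ fun i hi =>
      Submodule.smul_mem _ _ (Submodule.subset_span ⟨i, hi, rfl⟩)
  · rw [Submodule.span_le]
    rintro _ ⟨j, hj, rfl⟩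
    exact ⟨u j, by simp [orthoProj_mulVec hu, Finset.mem_coe.mp hj]⟩

theorem rank_orthoProj (s : Finset ι) : (orthoProj u s).rank = s.card := by
  rw [rank, range_orthoProj hu, Set.image_eq_range, finrank_span_eq_card]
  · simp
  · exact (linearIndependent_of_orthonormal hu).comp _ Subtype.val_injective

end OrthoProj

end Matrix

theorem Submodule.exists_eq_succ_of_monotone {K V : Type*} [DivisionRing K] [AddCommGroup V]
    [Module K V] [FiniteDimensional K V] {W : ℕ → Submodule K V} (hW : Monotone W) (a m : ℕ)
    (h : Module.finrank K V < Module.finrank K (W a) + m) :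
    ∃ k, a ≤ k ∧ k < a + m ∧ W k = W (k + 1) := by
  induction m generalizing a with
  | zero => exact absurd h (by simpa using Submodule.finrank_le (W a))
  | succ m ih =>
    by_cases hstep : W a = W (a + 1)
    · exact ⟨a, le_rfl, by omega, hstep⟩
    · have hlt := Submodule.finrank_lt_finrank_of_lt ((hW (a.le_add_right 1)).lt_of_ne hstep)
      obtain ⟨k, hak, hkm, hk⟩ := ih (a + 1) (by omega)
      exact ⟨k, by omega, by omega, hk⟩

theorem exists_orthonormal_extension {𝕜 ι : Type*} [RCLike 𝕜] [Fintype ι] [DecidableEq ι]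
    (i₀ : ι) {φ : ι → 𝕜} (hφ : star φ ⬝ᵥ φ = 1) :
    ∃ u : ι → ι → 𝕜,
      (∀ i j, star (u i) ⬝ᵥ u j = if i = j then 1 else 0) ∧ u i₀ = φ := by
  have hφ' : Orthonormal 𝕜 (({i₀} : Set ι).domRestrict fun _ => WithLp.toLp 2 φ) := by
    refine orthonormal_iff_ite.mpr fun i j => ?_
    rw [if_pos (Subsingleton.elim i j), EuclideanSpace.inner_eq_star_dotProduct]
    exact (dotProduct_comm _ _).trans hφ
  obtain ⟨b, hb⟩ := hφ'.exists_orthonormalBasis_extension_of_card_eq (by simp)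
  refine ⟨fun i => (b i).ofLp, fun i j => ?_, congrArg WithLp.ofLp (hb i₀ rfl)⟩
  rw [dotProduct_comm, ← EuclideanSpace.inner_eq_star_dotProduct]
  exact orthonormal_iff_ite.mp b.orthonormal i j

namespace RDPI

section Channel

variable {dA dB : ℕ} (N : Matrix (Fin dA) (Fin dA) ℂ →ₗ[ℂ] Matrix (Fin dB) (Fin dB) ℂ)

theorem map_apply_eq_sum_choi (M : Matrix (Fin dA) (Fin dA) ℂ) (k l : Fin dB) :
    N M k l = ∑ i, ∑ j, M i j * choi N (i, k) (j, l) := by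
  have hM : M = ∑ i, ∑ j, M i j • single i j (1 : ℂ) := by
    simpa [smul_single] using M.matrix_eq_sum_single
  conv_lhs => rw [hM]
  simp only [map_sum, map_smul, Matrix.sum_apply, Matrix.smul_apply, smul_eq_mul, choi]

-- `V = ψ̄ ⊗ 1`
theorem map_vecMulVec_star_eq_conj_choi (ψ : Fin dA → ℂ) :
    let V : Matrix (Fin dA × Fin dB) (Fin dB) ℂ :=
      of fun p l => star (ψ p.1) * (1 : Matrix (Fin dB) (Fin dB) ℂ) p.2 l
    N (vecMulVec ψ (star ψ)) = Vᴴ * choi N * V := by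
  ext k l
  simp only [map_apply_eq_sum_choi, vecMulVec_apply, Pi.star_apply, RCLike.star_def, one_apply,
    apply_ite, mul_one, mul_zero, mul_apply, conjTranspose_apply, of_apply,
    RingHomCompTriple.comp_apply, RingHom.id_apply, star_zero, ite_mul, zero_mul,
    Fintype.sum_prod_type, Finset.sum_ite_eq', Finset.mem_univ, ↓reduceIte, Finset.sum_mul]
  rw [Finset.sum_comm]
  exact Finset.sum_congr rfl fun i _ => Finset.sum_congr rfl fun j _ => by ring

variable {N} (hC : (choi N).PosSemidef)
include hC

theorem posSemidef_map_vecMulVec_star (ψ : Fin dA → ℂ) :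
    (N (vecMulVec ψ (star ψ))).PosSemidef := by
  rw [map_vecMulVec_star_eq_conj_choi]
  exact hC.conjTranspose_mul_mul_same _

theorem posSemidef_map_orthoProj {ι : Type*} (u : ι → Fin dA → ℂ) (s : Finset ι) :
    (N (orthoProj u s)).PosSemidef := by
  rw [orthoProj, map_sum]
  exact posSemidef_sum s fun i _ => posSemidef_map_vecMulVec_star hC (u i)

theorem supp_map_orthoProj_mono {ι : Type*} [DecidableEq ι] (u : ι → Fin dA → ℂ)
    {s t : Finset ι} (hst : s ⊆ t) :
    supp (N (orthoProj u s)) ≤ supp (N (orthoProj u t)) := by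
  rw [supp, supp, orthoProj, orthoProj, ← Finset.sum_sdiff hst, add_comm, map_add]
  exact (posSemidef_map_orthoProj hC u s).range_mulVecLin_le_add
    (posSemidef_map_orthoProj hC u _)

end Channel

/-- a non-purity-preserving channel with `d_A ≥ d_B` admits a projection `P`
and an orthogonal unit vector `ψ` with `supp N(P) = supp N(P + |ψ⟩⟨ψ|)`. -/
theorem exists_projection_same_support {dA dB : ℕ} (hd : dB ≤ dA)
    (N : Matrix (Fin dA) (Fin dA) ℂ →ₗ[ℂ] Matrix (Fin dB) (Fin dB) ℂ)
    (hN : IsQChannel N)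
    (φ : Fin dA → ℂ) (hφ : star φ ⬝ᵥ φ = 1)
    (hrank : 2 ≤ (N (Matrix.vecMulVec φ (star φ))).rank) :
    ∃ (P : Matrix (Fin dA) (Fin dA) ℂ) (ψ : Fin dA → ℂ),
      P * P = P ∧ Pᴴ = P ∧ 1 ≤ P.rank ∧ P.rank ≤ dA - 1 ∧
      star ψ ⬝ᵥ ψ = 1 ∧ P.mulVec ψ = 0 ∧
      supp (N P) = supp (N (P + Matrix.vecMulVec ψ (star ψ))) := by
  have hdB : 2 ≤ dB := hrank.trans ((N _).rank_le_card_height.trans (by simp))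
  obtain ⟨u, hu, hu0⟩ := exists_orthonormal_extension (⟨0, by omega⟩ : Fin dA) hφ
  let P (k : ℕ) : Matrix (Fin dA) (Fin dA) ℂ := orthoProj u {i | (i : ℕ) < k}
  have hP1 : P 1 = vecMulVec φ (star φ) := by
    have h1 : ({i | (i : ℕ) < 1} : Finset (Fin dA)) = {⟨0, by omega⟩} := by
      ext i
      simp [Fin.ext_iff]
    rw [show P 1 = _ from congrArg (orthoProj u) h1, orthoProj, Finset.sum_singleton, hu0]
  have hP_succ (k : ℕ) (hk : k < dA) :
      P (k + 1) = P k + vecMulVec (u ⟨k, hk⟩) (star (u ⟨k, hk⟩)) := by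
    have hins : ({i | (i : ℕ) < k + 1} : Finset (Fin dA)) =
        insert ⟨k, hk⟩ ({i | (i : ℕ) < k} : Finset (Fin dA)) := by
      ext i
      simp only [Finset.mem_filter, Finset.mem_univ, true_and, Finset.mem_insert, Fin.ext_iff]
      omega
    simp only [P, hins]
    exact orthoProj_insert u (by simp)
  have hrankP (k : ℕ) (hk : k ≤ dA) : (P k).rank = k := by
    simp [P, rank_orthoProj hu, Fin.card_filter_val_lt, hk]
  have hmono : Monotone fun k => supp (N (P k)) := fun k l hkl =>
    supp_map_orthoProj_mono hN.1 u fun i => by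
      simp only [Finset.mem_filter, Finset.mem_univ, true_and]
      omega
  obtain ⟨k, hk1, hkdA, hk⟩ := Submodule.exists_eq_succ_of_monotone hmono 1 (dA - 1) (by
    rw [Module.finrank_fin_fun, hP1]
    exact (by omega : dB < (N (vecMulVec φ (star φ))).rank + (dA - 1)))
  refine ⟨P k, u ⟨k, by omega⟩, orthoProj_mul_self hu _, conjTranspose_orthoProj _ _,
    by rw [hrankP k (by omega)]; omega, by rw [hrankP k (by omega)]; omega,
    by simpa using hu ⟨k, _⟩ ⟨k, _⟩, by simp [P, orthoProj_mulVec hu], ?_⟩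
  rw [← hP_succ]
  exact hk

end RDPI
end
end

section
/- Let ρ, σ be density matrices on ℂ^d such that ρ ≤ cσ for some c > 0, i.e. cσ − ρ is positive semidefinite. Then for every matrix X ∈ M_d(ℂ), g_ρ(X) ≥ (1/c) · g_σ(X), as values in [0,∞]. -/
open scoped Matrix ENNReal ComplexOrder

noncomputable section

/-!
Operator antitonicity of the inverse gives `(τ + r)⁻¹ ≤ (ρ + r)⁻¹` whenever `0 ≤ ρ ≤ τ`, and
`B ↦ Re Tr(Xᴴ B X B)` is monotone on positive matrices, so the BKM integrand, and with it
`g_τ(X) ≤ g_ρ(X)`, is antitone in the base matrix. The substitution `r ↦ c r` in the integral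
gives `g_{cσ} = c⁻¹ g_σ`; take `τ = cσ`.
-/

open MeasureTheory Set
open scoped MatrixOrder Matrix.Norms.L2Operator

theorem lintegral_Ioi_comp_mul_left (g : ℝ → ℝ≥0∞) (a : ℝ) {b : ℝ} (hb : 0 < b) :
    ∫⁻ x in Ioi a, g (b * x) = ENNReal.ofReal b⁻¹ * ∫⁻ x in Ioi (b * a), g x := by
  have hpre : (b * ·) ⁻¹' Ioi (b * a) = Ioi a := by
    rw [preimage_const_mul_Ioi₀ _ hb, mul_div_cancel_left₀ _ hb.ne']
  have hmap := lintegral_map_equiv ((Ioi (b * a)).indicator g)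
    (MeasurableEquiv.mulLeft₀ b hb.ne') (μ := volume)
  rw [MeasurableEquiv.coe_mulLeft₀, Real.map_volume_mul_left hb.ne', lintegral_smul_measure,
    abs_of_pos (inv_pos.mpr hb), lintegral_indicator measurableSet_Ioi] at hmap
  rw [← smul_eq_mul, hmap, ← lintegral_indicator measurableSet_Ioi, ← hpre]
  exact lintegral_congr fun _ => indicator_comp_right _

namespace Matrix

variable {n : Type*} [DecidableEq n]

theorem posDef_add_smul_one {A : Matrix n n ℂ} (hA : 0 ≤ A) {r : ℝ} (hr : 0 < r) :
    (A + (r : ℂ) • 1).PosDef :=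
  PosDef.posSemidef_add (nonneg_iff_posSemidef.mp hA) (PosDef.one.smul (by exact_mod_cast hr))

variable [Fintype n]

theorem inv_smul_of_ne_zero {K : Type*} [Field K] (A : Matrix n n K) {k : K} (hk : k ≠ 0) :
    (k • A)⁻¹ = k⁻¹ • A⁻¹ := by
  by_cases hA : IsUnit A.det
  · exact inv_smul' A (Units.mk0 k hk) hA
  · have hkA : ¬IsUnit (k • A).det := by
      rwa [det_smul, IsUnit.mul_iff, and_iff_right ((Ne.isUnit hk).pow _)]
    rw [nonsing_inv_apply_not_isUnit _ hA, nonsing_inv_apply_not_isUnit _ hkA, smul_zero]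

theorem PosDef.inv_le_inv_of_le {A B : Matrix n n ℂ} (hA : A.PosDef) (h : A ≤ B) :
    B⁻¹ ≤ A⁻¹ := by
  rw [nonsing_inv_eq_ringInverse, nonsing_inv_eq_ringInverse]
  exact CStarAlgebra.ringInverse_le_ringInverse h hA.isStrictlyPositive

theorem re_trace_mul_nonneg {A B : Matrix n n ℂ} (hA : 0 ≤ A) (hB : 0 ≤ B) :
    0 ≤ (A * B).trace.re := by
  obtain ⟨C, rfl⟩ := CStarAlgebra.nonneg_iff_eq_star_mul_self.mp hB
  rw [star_eq_conjTranspose, ← mul_assoc, trace_mul_cycle]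
  exact (Complex.nonneg_iff.mp
    ((nonneg_iff_posSemidef.mp hA).mul_mul_conjTranspose_same C).trace_nonneg).1

theorem re_trace_conjTranspose_mul_mul_mul_le {A B : Matrix n n ℂ} (hB : 0 ≤ B) (h : B ≤ A)
    (X : Matrix n n ℂ) : (Xᴴ * B * X * B).trace.re ≤ (Xᴴ * A * X * A).trace.re := by
  have hA := nonneg_iff_posSemidef.mp (hB.trans h)
  have hAB := le_iff.mp h
  have h₁ : 0 ≤ ((Xᴴ * A * X) * (A - B)).trace.re :=
    re_trace_mul_nonneg (nonneg_iff_posSemidef.mpr (hA.conjTranspose_mul_mul_same X))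
      (nonneg_iff_posSemidef.mpr hAB)
  have h₂ : 0 ≤ ((Xᴴ * (A - B) * X) * B).trace.re :=
    re_trace_mul_nonneg (nonneg_iff_posSemidef.mpr (hAB.conjTranspose_mul_mul_same X)) hB
  have hsplit : Xᴴ * A * X * A =
      Xᴴ * B * X * B + (Xᴴ * A * X) * (A - B) + (Xᴴ * (A - B) * X) * B := by
    noncomm_ring
  rw [hsplit, trace_add, trace_add, Complex.add_re, Complex.add_re]
  linarith

end Matrix

namespace RDPI

variable {d : ℕ}

theorem bkm_le_bkm_of_le {ρ τ : Matrix (Fin d) (Fin d) ℂ} (hρ : 0 ≤ ρ) (h : ρ ≤ τ)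
    (X : Matrix (Fin d) (Fin d) ℂ) : bkm τ X ≤ bkm ρ X := by
  refine setLIntegral_mono' measurableSet_Ioi fun r (hr : 0 < r) => ENNReal.ofReal_le_ofReal ?_
  have hshift : ρ + (r : ℂ) • 1 ≤ τ + (r : ℂ) • 1 := by gcongr
  have hτr : 0 ≤ (τ + (r : ℂ) • 1)⁻¹ :=
    Matrix.nonneg_iff_posSemidef.mpr (Matrix.posDef_add_smul_one (hρ.trans h) hr).inv.posSemidef
  exact Matrix.re_trace_conjTranspose_mul_mul_mul_le hτr
    ((Matrix.posDef_add_smul_one hρ hr).inv_le_inv_of_le hshift) X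

theorem bkm_smul (σ X : Matrix (Fin d) (Fin d) ℂ) {c : ℝ} (hc : 0 < c) :
    bkm ((c : ℂ) • σ) X = ENNReal.ofReal c⁻¹ * bkm σ X := by
  have hc' : (c : ℂ) ≠ 0 := by exact_mod_cast hc.ne'
  have hpoint (r : ℝ) :
      (Xᴴ * ((c : ℂ) • σ + (r : ℂ) • 1)⁻¹ * X * ((c : ℂ) • σ + (r : ℂ) • 1)⁻¹).trace.re
        = c⁻¹ * c⁻¹ * (Xᴴ * (σ + ((c⁻¹ * r : ℝ) : ℂ) • 1)⁻¹ * X *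
          (σ + ((c⁻¹ * r : ℝ) : ℂ) • 1)⁻¹).trace.re := by
    have hfactor : (c : ℂ) • σ + (r : ℂ) • 1 = (c : ℂ) • (σ + ((c⁻¹ * r : ℝ) : ℂ) • 1) := by
      rw [smul_add, smul_smul]
      push_cast
      rw [mul_inv_cancel_left₀ hc']
    rw [hfactor, Matrix.inv_smul_of_ne_zero _ hc']
    simp only [Matrix.mul_smul, Matrix.smul_mul, smul_smul, Matrix.trace_smul, smul_eq_mul]
    rw [← Complex.ofReal_inv, ← Complex.ofReal_mul, Complex.re_ofReal_mul]
  unfold bkm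
  simp_rw [hpoint, ENNReal.ofReal_mul (by positivity : 0 ≤ c⁻¹ * c⁻¹)]
  rw [lintegral_const_mul' _ _ ENNReal.ofReal_ne_top,
    lintegral_Ioi_comp_mul_left (fun s => ENNReal.ofReal
      ((Xᴴ * (σ + (s : ℂ) • 1)⁻¹ * X * (σ + (s : ℂ) • 1)⁻¹).trace.re)) 0 (inv_pos.mpr hc),
    mul_zero, inv_inv, ← mul_assoc, ← ENNReal.ofReal_mul (by positivity),
    inv_mul_cancel_right₀ hc.ne']

theorem bkm_comparison_of_le_general {d : ℕ} {ρ σ : Matrix (Fin d) (Fin d) ℂ}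
    (hρ : IsDensity ρ) {c : ℝ} (hc : 0 < c)
    (hle : ((c : ℂ) • σ - ρ).PosSemidef) :
    ∀ X : Matrix (Fin d) (Fin d) ℂ,
      ENNReal.ofReal (1 / c) * bkm σ X ≤ bkm ρ X := by
  intro X
  rw [one_div, ← bkm_smul σ X hc]
  exact bkm_le_bkm_of_le (Matrix.nonneg_iff_posSemidef.mpr hρ.1) hle X

/-- if `ρ ≤ c σ` then `g_ρ(X) ≥ (1/c) g_σ(X)`. -/
theorem bkm_comparison_of_le {d : ℕ} {ρ σ : Matrix (Fin d) (Fin d) ℂ}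
    (hρ : IsDensity ρ) (hσ : IsDensity σ) {c : ℝ} (hc : 0 < c)
    (hle : ((c : ℂ) • σ - ρ).PosSemidef) :
    ∀ X : Matrix (Fin d) (Fin d) ℂ,
      ENNReal.ofReal (1 / c) * bkm σ X ≤ bkm ρ X :=
  bkm_comparison_of_le_general hρ hc hle

end RDPI
end
end

section
/- Let 0 < p₂ < p₁ < 1 and let D_{p₁}, D_{p₂} be depolarizing channels on M_d(ℂ). Then for all density matrices ρ, σ on ℂ^d: ((1−p₁)/(1−p₂))² · (p₂/p₁) · D(D_{p₂}(ρ)‖D_{p₂}(σ)) ≤ D(D_{p₁}(ρ)‖D_{p₁}(σ)) ≤ ((1−p₁)/(1−p₂))² · ((1 − ((d−1)/d)p₂)/(1 − ((d−1)/d)p₁)) · D(D_{p₂}(ρ)‖D_{p₂}(σ)). -/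
open scoped Matrix ENNReal ComplexOrder

noncomputable section

namespace RDPI

/-- The depolarizing channel `D_p(ρ) = (1-p)ρ + (p/d) Tr(ρ) I`. -/
def depol (d : ℕ) (p : ℝ) (ρ : Matrix (Fin d) (Fin d) ℂ) : Matrix (Fin d) (Fin d) ℂ :=
  ((1 - p : ℝ) : ℂ) • ρ + ((p / d : ℝ) : ℂ) • ρ.trace • (1 : Matrix (Fin d) (Fin d) ℂ)

/-!
Diagonalise `ρ = ∑ aᵢ |uᵢ⟩⟨uᵢ|` and `σ = ∑ bⱼ |vⱼ⟩⟨vⱼ|`. The channel `D_p` acts on spectra by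
`x ↦ (1 - p) x + p / d` and keeps the eigenvectors, so
`D(D_p ρ ‖ D_p σ) = ∑ᵢⱼ |⟨uᵢ, vⱼ⟩|² k(xᵢ, yⱼ)` with `k(x, y) = x log x - x log y - x + y` and
weights that do not depend on `p`. By Taylor's formula with integral remainder,
`k(x, y) = ∫₀¹ (1 - t) (x - y)² / ((1 - t) y + t x) dt`, and at `x = (1 - p) α + p / d`,
`y = (1 - p) β + p / d` the integrand is `(1 - t) (α - β)² (1 - p)² / ((1 - p) m + p / d)` with
`m = (1 - t) β + t α ∈ [0, 1]`. Hence everything reduces to comparing these weights for `p₁` and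
`p₂`: their quotient is `((1 - p₁) / (1 - p₂))²` times a Möbius function of `m`, monotone on
`[0, 1]`, with value `p₂ / p₁` at `m = 0` and `(1 - (d - 1) p₂ / d) / (1 - (d - 1) p₁ / d)` at
`m = 1`.
-/

open Matrix Set

def scalarRelEnt (x y : ℝ) : ℝ := x * Real.log x - x * Real.log y - x + y

lemma scalarRelEnt_eq_integral {x y : ℝ} (hx : 0 < x) (hy : 0 < y) :
    scalarRelEnt x y = ∫ t in (0 : ℝ)..1, (1 - t) * (x - y) ^ 2 / ((1 - t) * y + t * x) := by
  have hpos : ∀ t ∈ uIcc (0 : ℝ) 1, 0 < (1 - t) * y + t * x := fun t ht => by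
    rw [uIcc_of_le zero_le_one] at ht
    exact convex_Ioi (0 : ℝ) hy hx (by linarith [ht.2]) ht.1 (by ring)
  rw [intervalIntegral.integral_eq_sub_of_hasDerivAt
    (f := fun t => x * Real.log ((1 - t) * y + t * x) - (x - y) * t)]
  · simp only [scalarRelEnt, sub_self, zero_mul, one_mul, zero_add, mul_one, sub_zero, add_zero,
      mul_zero]
    ring
  · intro t ht
    have hden := hpos t ht
    have hlin : HasDerivAt (fun t : ℝ => (1 - t) * y + t * x) (x - y) t :=
      ((((hasDerivAt_id' t).const_sub 1).mul_const y).add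
        ((hasDerivAt_id' t).mul_const x)).congr_deriv (by ring)
    refine (((hlin.log hden.ne').const_mul x).sub
      ((hasDerivAt_id t).const_mul (x - y))).congr_deriv ?_
    rw [eq_div_iff hden.ne', sub_mul, mul_div_assoc', div_mul_cancel₀ _ hden.ne']
    ring
  · exact (ContinuousOn.div (by fun_prop) (by fun_prop) fun t ht =>
      (hpos t ht).ne').intervalIntegrable

section Affine

variable {c s α β : ℝ}

lemma scalarRelEnt_affine_eq_integral (hc : 0 ≤ c) (hs : 0 < s) (hα : α ∈ Icc (0 : ℝ) 1)
    (hβ : β ∈ Icc (0 : ℝ) 1) :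
    scalarRelEnt (c * α + s) (c * β + s) =
      ∫ t in (0 : ℝ)..1, (1 - t) * (α - β) ^ 2 * (c ^ 2 / (c * ((1 - t) * β + t * α) + s)) := by
  rw [scalarRelEnt_eq_integral (by nlinarith [hα.1]) (by nlinarith [hβ.1])]
  congr 1
  ext t
  ring

lemma intervalIntegrable_scalarRelEnt_affine_integrand (hc : 0 ≤ c) (hs : 0 < s)
    (hα : α ∈ Icc (0 : ℝ) 1) (hβ : β ∈ Icc (0 : ℝ) 1) :
    IntervalIntegrable
      (fun t => (1 - t) * (α - β) ^ 2 * (c ^ 2 / (c * ((1 - t) * β + t * α) + s)))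
      MeasureTheory.volume 0 1 := by
  refine ContinuousOn.intervalIntegrable
    (ContinuousOn.mul (by fun_prop) (ContinuousOn.div (by fun_prop) (by fun_prop) fun t ht => ?_))
  rw [uIcc_of_le zero_le_one] at ht
  have hm : 0 ≤ (1 - t) * β + t * α := (convex_Icc (0 : ℝ) 1 hβ hα (by linarith [ht.2]) ht.1
    (by ring)).1
  exact (add_pos_of_nonneg_of_pos (mul_nonneg hc hm) hs).ne'

end Affine

lemma mul_scalarRelEnt_affine_le_mul {K K' c s c' s' α β : ℝ} (hc : 0 ≤ c) (hs : 0 < s)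
    (hc' : 0 ≤ c') (hs' : 0 < s') (hα : α ∈ Icc (0 : ℝ) 1) (hβ : β ∈ Icc (0 : ℝ) 1)
    (hw : ∀ m ∈ Icc (0 : ℝ) 1, K * (c ^ 2 / (c * m + s)) ≤ K' * (c' ^ 2 / (c' * m + s'))) :
    K * scalarRelEnt (c * α + s) (c * β + s) ≤ K' * scalarRelEnt (c' * α + s') (c' * β + s') := by
  rw [scalarRelEnt_affine_eq_integral hc hs hα hβ, scalarRelEnt_affine_eq_integral hc' hs' hα hβ,
    ← intervalIntegral.integral_const_mul, ← intervalIntegral.integral_const_mul]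
  refine intervalIntegral.integral_mono_on zero_le_one
    ((intervalIntegrable_scalarRelEnt_affine_integrand hc hs hα hβ).const_mul K)
    ((intervalIntegrable_scalarRelEnt_affine_integrand hc' hs' hα hβ).const_mul K') fun t ht => ?_
  rw [mul_left_comm K, mul_left_comm K']
  exact mul_le_mul_of_nonneg_left
    (hw _ (convex_Icc (0 : ℝ) 1 hβ hα (by linarith [ht.2]) ht.1 (by ring)))
    (mul_nonneg (by linarith [ht.2]) (sq_nonneg _))

section DepolarizingWeights

variable {p p₁ p₂ δ m : ℝ}

lemma depolDenom_pos (hδ : 0 < δ) (hp : 0 < p) (hp1 : p ≤ 1) (hm : 0 ≤ m) :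
    0 < (1 - p) * m + p / δ := by
  have := mul_nonneg (sub_nonneg.2 hp1) hm
  positivity

lemma depolDenom_one (hδ : δ ≠ 0) : (1 - p) * 1 + p / δ = 1 - ((δ - 1) / δ) * p := by
  field_simp
  ring

lemma depolWeight_eq_mul (hδ : 0 < δ) (h₂ : 0 < p₂) (h₁₂ : p₂ < p₁) (h₁ : p₁ < 1) (hm : 0 ≤ m) :
    (1 - p₁) ^ 2 / ((1 - p₁) * m + p₁ / δ) =
      ((1 - p₁) / (1 - p₂)) ^ 2 * (((1 - p₂) * m + p₂ / δ) / ((1 - p₁) * m + p₁ / δ)) *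
        ((1 - p₂) ^ 2 / ((1 - p₂) * m + p₂ / δ)) := by
  have hb : 1 - p₂ ≠ 0 := by linarith
  have hD₁ := (depolDenom_pos hδ (h₂.trans h₁₂) h₁.le hm).ne'
  have hD₂ := (depolDenom_pos hδ h₂ (h₁₂.trans h₁).le hm).ne'
  generalize (1 - p₁) * m + p₁ / δ = D₁ at *
  generalize (1 - p₂) * m + p₂ / δ = D₂ at *
  field_simp

lemma div_le_depolRatio (hδ : 0 < δ) (h₂ : 0 < p₂) (h₁₂ : p₂ < p₁) (h₁ : p₁ < 1) (hm : 0 ≤ m) :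
    p₂ / p₁ ≤ ((1 - p₂) * m + p₂ / δ) / ((1 - p₁) * m + p₁ / δ) := by
  rw [div_le_div_iff₀ (h₂.trans h₁₂) (depolDenom_pos hδ (h₂.trans h₁₂) h₁.le hm)]
  have key : ((1 - p₂) * m + p₂ / δ) * p₁ - p₂ * ((1 - p₁) * m + p₁ / δ) = (p₁ - p₂) * m := by
    ring
  linarith [mul_nonneg (sub_nonneg.2 h₁₂.le) hm]

lemma depolRatio_le (hδ : 0 < δ) (h₂ : 0 < p₂) (h₁₂ : p₂ < p₁) (h₁ : p₁ < 1)
    (hm : m ∈ Icc (0 : ℝ) 1) :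
    ((1 - p₂) * m + p₂ / δ) / ((1 - p₁) * m + p₁ / δ) ≤
      (1 - ((δ - 1) / δ) * p₂) / (1 - ((δ - 1) / δ) * p₁) := by
  rw [← depolDenom_one hδ.ne', ← depolDenom_one hδ.ne',
    div_le_div_iff₀ (depolDenom_pos hδ (h₂.trans h₁₂) h₁.le hm.1)
      (depolDenom_pos hδ (h₂.trans h₁₂) h₁.le zero_le_one)]
  have key : ((1 - p₂) * 1 + p₂ / δ) * ((1 - p₁) * m + p₁ / δ) -
      ((1 - p₂) * m + p₂ / δ) * ((1 - p₁) * 1 + p₁ / δ) = (1 - m) * ((p₁ - p₂) / δ) := by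
    ring
  have := mul_nonneg (sub_nonneg.2 hm.2) (div_nonneg (sub_nonneg.2 h₁₂.le) hδ.le)
  linarith

lemma mul_depolWeight_le (hδ : 0 < δ) (h₂ : 0 < p₂) (h₁₂ : p₂ < p₁) (h₁ : p₁ < 1) (hm : 0 ≤ m) :
    ((1 - p₁) / (1 - p₂)) ^ 2 * (p₂ / p₁) * ((1 - p₂) ^ 2 / ((1 - p₂) * m + p₂ / δ)) ≤
      (1 - p₁) ^ 2 / ((1 - p₁) * m + p₁ / δ) := by
  have hD₂ := depolDenom_pos hδ h₂ (h₁₂.trans h₁).le hm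
  rw [depolWeight_eq_mul hδ h₂ h₁₂ h₁ hm]
  gcongr _ * ?_ * _
  exact div_le_depolRatio hδ h₂ h₁₂ h₁ hm

lemma depolWeight_le_mul (hδ : 0 < δ) (h₂ : 0 < p₂) (h₁₂ : p₂ < p₁) (h₁ : p₁ < 1)
    (hm : m ∈ Icc (0 : ℝ) 1) :
    (1 - p₁) ^ 2 / ((1 - p₁) * m + p₁ / δ) ≤
      ((1 - p₁) / (1 - p₂)) ^ 2 * ((1 - ((δ - 1) / δ) * p₂) / (1 - ((δ - 1) / δ) * p₁)) *
        ((1 - p₂) ^ 2 / ((1 - p₂) * m + p₂ / δ)) := by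
  have hD₂ := depolDenom_pos hδ h₂ (h₁₂.trans h₁).le hm.1
  rw [depolWeight_eq_mul hδ h₂ h₁₂ h₁ hm.1]
  gcongr _ * ?_ * _
  exact depolRatio_le hδ h₂ h₁₂ h₁ hm

end DepolarizingWeights

section Spectral

variable {n : Type*} [Fintype n] [DecidableEq n] {A B : Matrix n n ℂ}

lemma trace_diagonal_mul_mul_diagonal_mul_star (W : Matrix n n ℂ) (f g : n → ℝ) :
    (diagonal (fun i => (f i : ℂ)) * W * diagonal (fun j => (g j : ℂ)) * star W).trace =
      ((∑ i, ∑ j, Complex.normSq (W i j) * f i * g j : ℝ) : ℂ) := by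
  simp_rw [trace, diag, mul_apply, diagonal_apply, ite_mul, mul_ite, zero_mul, mul_zero,
    Finset.sum_ite_eq, Finset.sum_ite_eq', Finset.mem_univ, if_true, star_apply]
  push_cast
  refine Finset.sum_congr rfl fun i _ => Finset.sum_congr rfl fun j _ => ?_
  rw [← Complex.mul_conj, RCLike.star_def]
  ring

def eigenOverlap (hA : A.IsHermitian) (hB : B.IsHermitian) (i j : n) : ℝ :=
  Complex.normSq ((star (hA.eigenvectorUnitary : Matrix n n ℂ) * hB.eigenvectorUnitary) i j)

lemma trace_cfc_mul_cfc (hA : A.IsHermitian) (hB : B.IsHermitian) (f g : ℝ → ℝ) :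
    (cfc f A * cfc g B).trace = ((∑ i, ∑ j, eigenOverlap hA hB i j * f (hA.eigenvalues i) *
      g (hB.eigenvalues j) : ℝ) : ℂ) := by
  set U : Matrix n n ℂ := ↑hA.eigenvectorUnitary
  set V : Matrix n n ℂ := ↑hB.eigenvectorUnitary
  set D := diagonal (fun i => (f (hA.eigenvalues i) : ℂ))
  set E := diagonal (fun j => (g (hB.eigenvalues j) : ℂ))
  have hA' : cfc f A = U * D * star U := hA.cfc_eq f
  have hB' : cfc g B = V * E * star V := hB.cfc_eq g
  calc (cfc f A * cfc g B).trace = (U * (D * star U * (V * E * star V))).trace := by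
        rw [hA', hB']; simp only [mul_assoc]
    _ = (D * (star U * V) * E * star (star U * V)).trace := by
        rw [trace_mul_comm, star_mul, star_star]; simp only [mul_assoc]
    _ = _ := trace_diagonal_mul_mul_diagonal_mul_star _ _ _

end Spectral

section Channel

variable {d : ℕ}

lemma matLog_eq_cfc {A : Matrix (Fin d) (Fin d) ℂ} (hA : A.IsHermitian) :
    matLog A = cfc Real.log A := by
  rw [matLog, dif_pos hA, hA.cfc_eq, IsHermitian.cfc, Unitary.conjStarAlgAut_apply]
  rfl

lemma supp_eq_top_of_isUnit {A : Matrix (Fin d) (Fin d) ℂ} (hA : IsUnit A) : supp A = ⊤ :=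
  LinearMap.range_eq_top.2 (mulVec_surjective_iff_isUnit.2 hA)

lemma IsDensity.eigenvalues_mem_Icc {ρ : Matrix (Fin d) (Fin d) ℂ} (hρ : IsDensity ρ)
    (i : Fin d) : hρ.1.isHermitian.eigenvalues i ∈ Icc (0 : ℝ) 1 := by
  refine ⟨hρ.1.eigenvalues_nonneg i, ?_⟩
  have hsum : ∑ j, hρ.1.isHermitian.eigenvalues j = 1 := by
    have h := hρ.1.isHermitian.trace_eq_sum_eigenvalues.symm.trans hρ.2
    simpa using congrArg Complex.re h
  rw [← hsum]
  exact Finset.single_le_sum (fun j _ => hρ.1.eigenvalues_nonneg j) (Finset.mem_univ i)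

lemma trace_depol (hd : d ≠ 0) (p : ℝ) (ρ : Matrix (Fin d) (Fin d) ℂ) :
    (depol d p ρ).trace = ρ.trace := by
  simp only [depol, Complex.ofReal_sub, Complex.ofReal_one, Complex.ofReal_div,
    Complex.ofReal_natCast, trace_add, trace_smul, smul_eq_mul, trace_one, Fintype.card_fin]
  field_simp
  ring

lemma depol_eq_cfc (p : ℝ) {ρ : Matrix (Fin d) (Fin d) ℂ} (hρ : ρ.IsHermitian)
    (htr : ρ.trace = 1) : depol d p ρ = cfc (fun x => (1 - p) * x + p / d) ρ := by
  rw [cfc_add_const (p / d) (fun x => (1 - p) * x) ρ, cfc_const_mul_id (1 - p) ρ, depol, htr,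
    one_smul, Algebra.algebraMap_eq_smul_one]
  rfl

lemma relEnt_cfc_eq_sum {A B : Matrix (Fin d) (Fin d) ℂ} (hA : A.IsHermitian)
    (hB : B.IsHermitian) {h : ℝ → ℝ} (hpos : ∀ j, 0 < h (hB.eigenvalues j))
    (htr : (cfc h A).trace = (cfc h B).trace) :
    relEnt (cfc h A) (cfc h B) = ENNReal.ofReal (∑ i, ∑ j, eigenOverlap hA hB i j *
      scalarRelEnt (h (hA.eigenvalues i)) (h (hB.eigenvalues j))) := by
  have hunit : IsUnit (cfc h B) := by
    rw [isUnit_cfc_iff h B ((toFinite _).continuousOn _), hB.spectrum_real_eq_range_eigenvalues]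
    rintro _ ⟨j, rfl⟩
    exact (hpos j).ne'
  have hlog : ∀ {X : Matrix (Fin d) (Fin d) ℂ}, X.IsHermitian →
      matLog (cfc h X) = cfc (Real.log ∘ h) X := fun {X} hX => by
    rw [matLog_eq_cfc (cfc_predicate h X)]
    exact (cfc_comp Real.log h X hX ((toFinite _).continuousOn _)
      ((toFinite _).continuousOn _)).symm
  have hself : cfc h A * cfc (Real.log ∘ h) A =
      cfc (fun x => h x * Real.log (h x)) A * cfc (1 : ℝ → ℝ) B := by
    rw [cfc_one ℝ B, mul_one,
      ← cfc_mul h _ A ((toFinite _).continuousOn _) ((toFinite _).continuousOn _)]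
    rfl
  -- `cfc 1 = 1` lets the trace formula express both traces with the same weights.
  have hmass : ∑ i, ∑ j, eigenOverlap hA hB i j * h (hA.eigenvalues i) =
      ∑ i, ∑ j, eigenOverlap hA hB i j * h (hB.eigenvalues j) := by
    have h₁ := trace_cfc_mul_cfc hA hB h 1
    have h₂ := trace_cfc_mul_cfc hA hB 1 h
    rw [cfc_one ℝ B, mul_one] at h₁
    rw [cfc_one ℝ A, one_mul] at h₂
    simpa using Complex.ofReal_inj.1 (h₁.symm.trans (htr.trans h₂))
  rw [relEnt, if_pos (supp_eq_top_of_isUnit hunit ▸ le_top), hlog hA, hlog hB, mul_sub, trace_sub,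
    hself, trace_cfc_mul_cfc hA hB, trace_cfc_mul_cfc hA hB, ← Complex.ofReal_sub,
    Complex.ofReal_re]
  congr 1
  simp only [scalarRelEnt, Function.comp_apply, Pi.one_apply, mul_one, mul_add, mul_sub,
    Finset.sum_add_distrib, Finset.sum_sub_distrib, hmass, mul_assoc]
  ring

lemma relEnt_depol_eq_sum (hd : d ≠ 0) {p : ℝ} (hp : 0 < p) (hp1 : p ≤ 1)
    {ρ σ : Matrix (Fin d) (Fin d) ℂ} (hρ : IsDensity ρ) (hσ : IsDensity σ) :
    relEnt (depol d p ρ) (depol d p σ) =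
      ENNReal.ofReal (∑ i, ∑ j, eigenOverlap hρ.1.isHermitian hσ.1.isHermitian i j *
        scalarRelEnt ((1 - p) * hρ.1.isHermitian.eigenvalues i + p / d)
          ((1 - p) * hσ.1.isHermitian.eigenvalues j + p / d)) := by
  have hd' : (0 : ℝ) < d := by exact_mod_cast Nat.pos_of_ne_zero hd
  have htr : (depol d p ρ).trace = (depol d p σ).trace := by
    rw [trace_depol hd, trace_depol hd, hρ.2, hσ.2]
  rw [depol_eq_cfc p hρ.1.isHermitian hρ.2, depol_eq_cfc p hσ.1.isHermitian hσ.2] at htr ⊢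
  exact relEnt_cfc_eq_sum _ _
    (fun j => depolDenom_pos hd' hp hp1 (hσ.eigenvalues_mem_Icc j).1) htr

lemma ofReal_mul_relEnt_depol_le_mul (hd : d ≠ 0) {K K' q q' : ℝ} (hK : 0 ≤ K) (hK' : 0 ≤ K')
    (hq : 0 < q) (hq1 : q ≤ 1) (hq' : 0 < q') (hq'1 : q' ≤ 1)
    {ρ σ : Matrix (Fin d) (Fin d) ℂ} (hρ : IsDensity ρ) (hσ : IsDensity σ)
    (hw : ∀ m ∈ Icc (0 : ℝ) 1, K * ((1 - q) ^ 2 / ((1 - q) * m + q / d)) ≤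
      K' * ((1 - q') ^ 2 / ((1 - q') * m + q' / d))) :
    ENNReal.ofReal K * relEnt (depol d q ρ) (depol d q σ) ≤
      ENNReal.ofReal K' * relEnt (depol d q' ρ) (depol d q' σ) := by
  have hd' : (0 : ℝ) < d := by exact_mod_cast Nat.pos_of_ne_zero hd
  rw [relEnt_depol_eq_sum hd hq hq1 hρ hσ, relEnt_depol_eq_sum hd hq' hq'1 hρ hσ,
    ← ENNReal.ofReal_mul hK, ← ENNReal.ofReal_mul hK', Finset.mul_sum, Finset.mul_sum]
  refine ENNReal.ofReal_le_ofReal (Finset.sum_le_sum fun i _ => ?_)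
  rw [Finset.mul_sum, Finset.mul_sum]
  refine Finset.sum_le_sum fun j _ => ?_
  rw [mul_left_comm K, mul_left_comm K']
  exact mul_le_mul_of_nonneg_left (mul_scalarRelEnt_affine_le_mul (sub_nonneg.2 hq1)
    (by positivity) (sub_nonneg.2 hq'1) (by positivity) (hρ.eigenvalues_mem_Icc i)
    (hσ.eigenvalues_mem_Icc j) hw) (Complex.normSq_nonneg _)

end Channel

/-- relative expansion/contraction bounds for a pair of depolarizing
channels. -/
theorem depolarizing_relative_bounds {d : ℕ} (hd : 0 < d)
    {p₁ p₂ : ℝ} (h₂ : 0 < p₂) (h₁₂ : p₂ < p₁) (h₁ : p₁ < 1)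
    (ρ σ : Matrix (Fin d) (Fin d) ℂ) (hρ : IsDensity ρ) (hσ : IsDensity σ) :
    ENNReal.ofReal (((1 - p₁)/(1 - p₂))^2 * (p₂/p₁)) *
        relEnt (depol d p₂ ρ) (depol d p₂ σ) ≤ relEnt (depol d p₁ ρ) (depol d p₁ σ) ∧
    relEnt (depol d p₁ ρ) (depol d p₁ σ) ≤
      ENNReal.ofReal (((1 - p₁)/(1 - p₂))^2 *
          ((1 - ((d - 1 : ℝ)/d) * p₂)/(1 - ((d - 1 : ℝ)/d) * p₁))) *
        relEnt (depol d p₂ ρ) (depol d p₂ σ) := by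
  have hδ : (0 : ℝ) < d := by exact_mod_cast hd
  have h₁₀ : 0 < p₁ := h₂.trans h₁₂
  have h₂₁ : p₂ < 1 := h₁₂.trans h₁
  have hU : 0 ≤ (1 - ((d - 1 : ℝ) / d) * p₂) / (1 - ((d - 1 : ℝ) / d) * p₁) := by
    rw [← depolDenom_one hδ.ne', ← depolDenom_one hδ.ne']
    exact (div_pos (depolDenom_pos hδ h₂ h₂₁.le zero_le_one)
      (depolDenom_pos hδ h₁₀ h₁.le zero_le_one)).le
  constructor
  · simpa using ofReal_mul_relEnt_depol_le_mul hd.ne' (by positivity) zero_le_one h₂ h₂₁.le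
      h₁₀ h₁.le hρ hσ fun m hm => (mul_depolWeight_le hδ h₂ h₁₂ h₁ hm.1).trans_eq (one_mul _).symm
  · simpa using ofReal_mul_relEnt_depol_le_mul hd.ne' zero_le_one (by positivity) h₁₀ h₁.le
      h₂ h₂₁.le hρ hσ fun m hm => (one_mul _).trans_le (depolWeight_le_mul hδ h₂ h₁₂ h₁ hm)

end RDPI
end
end

section
/- Let X ∈ M_d(ℂ) be a traceless Hermitian matrix and let σ be any density matrix on ℂ^d. Then (‖X‖₁)² ≤ g_σ(X), where ‖X‖₁ = Tr√(X†X) is the trace norm and g is the BKM metric (the inequality is understood in [0,∞]; in particular it holds trivially when supp(X) ⊄ supp(σ), where g_σ(X) = +∞). -/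
open scoped Matrix ENNReal ComplexOrder

noncomputable section

namespace RDPI

/-- The trace norm `‖X‖₁ = Tr √(X†X)`. -/
def traceNorm {d d' : ℕ} (X : Matrix (Fin d) (Fin d') ℂ) : ℝ :=
  ((Matrix.posSemidef_conjTranspose_mul_self X).1.eigenvectorUnitary.1 *
    Matrix.diagonal (((↑) : ℝ → ℂ) ∘ Real.sqrt ∘ (Matrix.posSemidef_conjTranspose_mul_self X).1.eigenvalues) *
    (star (Matrix.posSemidef_conjTranspose_mul_self X).1.eigenvectorUnitary :
      Matrix (Fin d') (Fin d') ℂ)).trace.re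

/-!
Diagonalise `σ = U diag(μ) U*` and put `Y = U* X U`. The BKM metric becomes
`∑ᵢₖ |Yₖᵢ|² K(μᵢ, μₖ)` with `K(a, b) = ∫₀^∞ dr / ((a + r)(b + r))`, and AM–GM
`(a + r)(b + r) ≤ ((a + b)/2 + r)²` gives `K(a, b) ≥ 2 / (a + b)` (`= ∞` when `a = b = 0`).
On the other side `‖X‖₁ = Tr (S X)` for the unitary `S = sign X`, so with `S' = U* S U`
we get `‖X‖₁ ≤ ∑ᵢₖ |S'ᵢₖ| |Yₖᵢ|`. Cauchy–Schwarz with weights `(μᵢ + μₖ)/2` concludes,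
because the rows and columns of the unitary `S'` are unit vectors, so
`∑ᵢₖ |S'ᵢₖ|² (μᵢ + μₖ)/2 = ∑ᵢ μᵢ = 1`.
-/

open MeasureTheory Set Filter Matrix

lemma ofReal_sq_sum_mul_le_mul_sum_mul_inv {ι : Type*} [Fintype ι] (a b w : ι → ℝ)
    (hw : ∀ i, 0 ≤ w i) (hpos : 0 < ∑ i, a i ^ 2 * w i) :
    ENNReal.ofReal ((∑ i, a i * b i) ^ 2) ≤ ENNReal.ofReal (∑ i, a i ^ 2 * w i) *
      ∑ i, ENNReal.ofReal (b i ^ 2) * (ENNReal.ofReal (w i))⁻¹ := by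
  by_cases hdeg : ∃ i, w i = 0 ∧ b i ≠ 0
  · obtain ⟨i, hwi, hbi⟩ := hdeg
    have hterm : ENNReal.ofReal (b i ^ 2) * (ENNReal.ofReal (w i))⁻¹ = ⊤ := by
      rw [hwi, ENNReal.ofReal_zero, ENNReal.inv_zero, ENNReal.mul_top]
      exact (ENNReal.ofReal_pos.mpr (by positivity)).ne'
    rw [ENNReal.sum_eq_top.mpr ⟨i, Finset.mem_univ i, hterm⟩,
      ENNReal.mul_top (ENNReal.ofReal_pos.mpr hpos).ne']
    exact le_top
  push Not at hdeg
  have hterm (i : ι) : ENNReal.ofReal (b i ^ 2) * (ENNReal.ofReal (w i))⁻¹ =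
      ENNReal.ofReal (b i ^ 2 / w i) := by
    rcases (hw i).eq_or_lt with hwi | hwi
    · simp [hdeg i hwi.symm]
    · rw [ENNReal.ofReal_div_of_pos hwi, div_eq_mul_inv]
  simp only [hterm]
  rw [← ENNReal.ofReal_sum_of_nonneg fun i _ => div_nonneg (sq_nonneg _) (hw i),
    ← ENNReal.ofReal_mul hpos.le]
  refine ENNReal.ofReal_le_ofReal (Finset.sum_sq_le_sum_mul_sum_of_sq_le_mul _
    (fun i _ => mul_nonneg (sq_nonneg _) (hw i)) (fun i _ => div_nonneg (sq_nonneg _) (hw i))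
    fun i _ => ?_)
  rcases (hw i).eq_or_lt with hwi | hwi
  · simp [hdeg i hwi.symm]
  · exact le_of_eq (by field_simp)

def bkmKernel (a b : ℝ) : ℝ≥0∞ :=
  ∫⁻ r in Ioi (0 : ℝ), ENNReal.ofReal ((a + r)⁻¹ * (b + r)⁻¹)

lemma lintegral_Ioi_inv_add_sq {c : ℝ} (hc : 0 < c) :
    ∫⁻ r in Ioi (0 : ℝ), ENNReal.ofReal ((c + r) ^ 2)⁻¹ = ENNReal.ofReal c⁻¹ := by
  have hderiv : ∀ x ∈ Ici (0 : ℝ), HasDerivAt (fun r => -(c + r)⁻¹) ((c + x) ^ 2)⁻¹ x := by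
    intro x (hx : 0 ≤ x)
    have := (((hasDerivAt_id x).const_add c).inv (by positivity)).neg
    rwa [neg_div, neg_neg, one_div] at this
  have hlim : Tendsto (fun r : ℝ => -(c + r)⁻¹) atTop (nhds 0) := by
    simpa using (tendsto_atTop_add_const_left _ c tendsto_id).inv_tendsto_atTop.neg
  have hint := integrableOn_Ioi_deriv_of_nonneg' hderiv (fun x _ => by positivity) hlim
  rw [← ofReal_integral_eq_lintegral_ofReal hint (.of_forall fun _ => by positivity),
    integral_Ioi_of_hasDerivAt_of_tendsto' hderiv hint hlim]
  simp

lemma ofReal_inv_le_bkmKernel {a b c : ℝ} (ha : 0 ≤ a) (hb : 0 ≤ b) (hc : 0 < c)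
    (habc : (a + b) / 2 ≤ c) : ENNReal.ofReal c⁻¹ ≤ bkmKernel a b := by
  rw [← lintegral_Ioi_inv_add_sq hc]
  refine setLIntegral_mono_ae (by fun_prop) <| .of_forall fun r (hr : 0 < r) => ?_
  refine ENNReal.ofReal_le_ofReal ?_
  rw [← mul_inv]
  refine inv_anti₀ (by positivity) ?_
  nlinarith [sq_nonneg (a - b)]

/-- At `a = b = 0` the left side is `0⁻¹ = ⊤`, and so is the kernel. -/
lemma inv_ofReal_mean_le_bkmKernel {a b : ℝ} (ha : 0 ≤ a) (hb : 0 ≤ b) :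
    (ENNReal.ofReal ((a + b) / 2))⁻¹ ≤ bkmKernel a b := by
  rcases (by positivity : 0 ≤ (a + b) / 2).eq_or_lt with hmean | hmean
  · rw [← hmean, ENNReal.ofReal_zero, ENNReal.inv_zero, top_le_iff]
    refine ENNReal.eq_top_of_forall_nnreal_le fun M => ?_
    calc (M : ℝ≥0∞) ≤ ENNReal.ofReal (M + 1 : ℝ) := by
          rw [ENNReal.ofReal_add (by positivity) zero_le_one]; simp
      _ = ENNReal.ofReal ((M + 1 : ℝ)⁻¹)⁻¹ := by rw [inv_inv]
      _ ≤ bkmKernel a b :=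
          ofReal_inv_le_bkmKernel ha hb (by positivity) (by rw [← hmean]; positivity)
  · rw [← ENNReal.ofReal_inv_of_pos hmean]
    exact ofReal_inv_le_bkmKernel ha hb hmean le_rfl

section Matrices

variable {n : Type*} [Fintype n]

lemma norm_trace_mul_le (A B : Matrix n n ℂ) :
    ‖(A * B).trace‖ ≤ ∑ p : n × n, ‖A p.1 p.2‖ * ‖B p.2 p.1‖ := by
  simp only [trace, diag_apply, mul_apply, Fintype.sum_prod_type, ← norm_mul]
  exact (norm_sum_le _ _).trans (Finset.sum_le_sum fun i _ => norm_sum_le _ _)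

variable [DecidableEq n]

lemma re_trace_conjTranspose_mul_diagonal_mul_mul_diagonal (Y : Matrix n n ℂ) (v w : n → ℝ) :
    (Yᴴ * diagonal (fun i => (v i : ℂ)) * Y * diagonal (fun i => (w i : ℂ))).trace.re =
      ∑ p : n × n, ‖Y p.2 p.1‖ ^ 2 * (w p.1 * v p.2) := by
  simp only [trace, diag_apply, mul_diagonal]
  simp only [mul_apply (M := Yᴴ * _), mul_diagonal, conjTranspose_apply, Finset.sum_mul,
    Complex.re_sum, Fintype.sum_prod_type]
  refine Finset.sum_congr rfl fun i _ => Finset.sum_congr rfl fun k _ => ?_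
  rw [RCLike.star_def, mul_right_comm _ _ (Y k i), Complex.conj_mul']
  norm_cast
  ring

lemma trace_conjStarAlgAut (U : unitary (Matrix n n ℂ)) (A : Matrix n n ℂ) :
    (Unitary.conjStarAlgAut ℂ _ U A).trace = A.trace := by
  rw [Unitary.conjStarAlgAut_apply, trace_mul_cycle, Unitary.coe_star_mul_self, one_mul]

lemma inv_add_smul_one_eq_conjStarAlgAut {σ : Matrix n n ℂ} {U : unitary (Matrix n n ℂ)}
    {μ : n → ℝ} (hσ : σ = Unitary.conjStarAlgAut ℂ _ U (diagonal (RCLike.ofReal ∘ μ))) {r : ℝ}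
    (hr : ∀ i, μ i + r ≠ 0) :
    (σ + (r : ℂ) • 1)⁻¹ = Unitary.conjStarAlgAut ℂ _ U (diagonal fun i => ((μ i + r)⁻¹ : ℝ)) := by
  have hshift : σ + (r : ℂ) • 1 =
      Unitary.conjStarAlgAut ℂ _ U (diagonal fun i => ((μ i + r : ℝ) : ℂ)) := by
    rw [hσ, ← map_one (Unitary.conjStarAlgAut ℂ _ U), ← map_smul, ← map_add]
    congr 1
    ext i j
    by_cases h : i = j <;> simp [h, one_apply]
  refine inv_eq_left_inv ?_
  rw [hshift, ← map_mul, diagonal_mul_diagonal, ← map_one (Unitary.conjStarAlgAut ℂ _ U),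
    ← diagonal_one]
  congr 2
  ext i
  rw [← Complex.ofReal_mul, inv_mul_cancel₀ (hr i), Complex.ofReal_one]

lemma sum_norm_sq_row_of_mem_unitary {S : Matrix n n ℂ} (hS : S ∈ unitary (Matrix n n ℂ))
    (i : n) : ∑ k, ‖S i k‖ ^ 2 = 1 := by
  have h : (S * star S) i i = (1 : Matrix n n ℂ) i i := by rw [Unitary.mul_star_self_of_mem hS]
  simp only [mul_apply, star_apply, RCLike.star_def, Complex.mul_conj', one_apply_eq] at h
  exact_mod_cast h

lemma sum_norm_sq_col_of_mem_unitary {S : Matrix n n ℂ} (hS : S ∈ unitary (Matrix n n ℂ))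
    (k : n) : ∑ i, ‖S i k‖ ^ 2 = 1 := by
  simpa using sum_norm_sq_row_of_mem_unitary (Unitary.star_mem hS) k

lemma sum_norm_sq_mul_mean_of_mem_unitary {S : Matrix n n ℂ} (hS : S ∈ unitary (Matrix n n ℂ))
    (w : n → ℝ) : ∑ p : n × n, ‖S p.1 p.2‖ ^ 2 * ((w p.1 + w p.2) / 2) = ∑ i, w i := by
  calc _ = ∑ i, ∑ k, w i * ‖S i k‖ ^ 2 / 2 + ∑ k, ∑ i, w k * ‖S i k‖ ^ 2 / 2 := by
        rw [Finset.sum_comm (f := fun k i => w k * ‖S i k‖ ^ 2 / 2), Fintype.sum_prod_type,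
          ← Finset.sum_add_distrib]
        refine Finset.sum_congr rfl fun i _ => ?_
        rw [← Finset.sum_add_distrib]
        refine Finset.sum_congr rfl fun k _ => ?_
        ring
    _ = ∑ i, w i := by
        simp only [← Finset.sum_div, ← Finset.mul_sum, sum_norm_sq_row_of_mem_unitary hS,
          sum_norm_sq_col_of_mem_unitary hS, mul_one, add_halves]

end Matrices

section TraceNorm

open scoped MatrixOrder

lemma traceNorm_eq_re_trace_abs {d : ℕ} (X : Matrix (Fin d) (Fin d) ℂ) :
    traceNorm X = (CFC.abs X).trace.re := by
  have hXX := posSemidef_conjTranspose_mul_self X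
  rw [CFC.abs, CFC.sqrt_eq_real_sqrt (star X * X) hXX.nonneg, cfcₙ_eq_cfc]
  exact congrArg (·.trace.re) (hXX.1.cfc_eq Real.sqrt).symm

lemma exists_mem_unitary_re_trace_mul_eq_traceNorm {d : ℕ} {X : Matrix (Fin d) (Fin d) ℂ}
    (hX : X.IsHermitian) :
    ∃ S ∈ unitary (Matrix (Fin d) (Fin d) ℂ), (S * X).trace.re = traceNorm X := by
  -- `sign 0 = 1`, not `0`, so that `cfc sign X` squares to `1`.
  let sign : ℝ → ℝ := fun x => if x < 0 then -1 else 1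
  have hsign : ContinuousOn sign (spectrum ℝ X) := X.finite_real_spectrum.continuousOn sign
  have hS : IsSelfAdjoint (cfc sign X) := cfc_predicate sign X
  have hSS : cfc sign X * cfc sign X = 1 := by
    rw [← cfc_mul sign sign X, ← cfc_one ℝ X]
    exact cfc_congr fun x _ => by by_cases hx : x < 0 <;> simp [sign, hx]
  refine ⟨cfc sign X, Unitary.mem_iff.mpr ⟨by rwa [hS.star_eq], by rwa [hS.star_eq]⟩, ?_⟩
  have hSX : cfc sign X * X = CFC.abs X := calc
    cfc sign X * X = cfc (fun x => sign x * x) X := by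
      rw [cfc_mul sign (fun x => x) X, cfc_id' ℝ X]
    _ = cfc (‖·‖) X := cfc_congr fun x _ => by
      by_cases hx : x < 0 <;> simp [sign, hx, abs_of_neg, abs_of_nonneg, not_lt.mp]
    _ = CFC.abs X := (CFC.abs_eq_cfc_norm X hX).symm
  rw [hSX, traceNorm_eq_re_trace_abs]

lemma traceNorm_nonneg {d : ℕ} (X : Matrix (Fin d) (Fin d) ℂ) : 0 ≤ traceNorm X := by
  rw [traceNorm_eq_re_trace_abs]
  exact (Complex.nonneg_iff.mp (nonneg_iff_posSemidef.mp (CFC.abs_nonneg X)).trace_nonneg).1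

end TraceNorm

lemma exists_mem_unitary_traceNorm_le_sum {d : ℕ} {X : Matrix (Fin d) (Fin d) ℂ}
    (hX : X.IsHermitian) (U : unitary (Matrix (Fin d) (Fin d) ℂ)) :
    ∃ S ∈ unitary (Matrix (Fin d) (Fin d) ℂ), traceNorm X ≤
      ∑ p : Fin d × Fin d, ‖S p.1 p.2‖ * ‖Unitary.conjStarAlgAut ℂ _ U X p.2 p.1‖ := by
  obtain ⟨S, hS, hSX⟩ := exists_mem_unitary_re_trace_mul_eq_traceNorm hX
  refine ⟨Unitary.conjStarAlgAut ℂ _ U S, mul_mem (mul_mem U.2 hS) (Unitary.star_mem U.2), ?_⟩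
  rw [← hSX, ← trace_conjStarAlgAut U, map_mul]
  exact (Complex.re_le_norm _).trans (norm_trace_mul_le _ _)

lemma IsDensity.sum_eigenvalues_eq_one {d : ℕ} {σ : Matrix (Fin d) (Fin d) ℂ}
    (hσ : IsDensity σ) : ∑ i, hσ.1.1.eigenvalues i = 1 := by
  have h := congrArg Complex.re hσ.1.1.trace_eq_sum_eigenvalues
  simp only [hσ.2, Complex.one_re, Complex.re_sum] at h
  exact h.symm

lemma re_trace_bkm_integrand_eq {d : ℕ} {σ : Matrix (Fin d) (Fin d) ℂ}
    {U : unitary (Matrix (Fin d) (Fin d) ℂ)} {μ : Fin d → ℝ}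
    (hσ : σ = Unitary.conjStarAlgAut ℂ _ U (diagonal (RCLike.ofReal ∘ μ)))
    (X : Matrix (Fin d) (Fin d) ℂ) {r : ℝ} (hr : ∀ i, μ i + r ≠ 0) :
    (Xᴴ * (σ + (r : ℂ) • 1)⁻¹ * X * (σ + (r : ℂ) • 1)⁻¹).trace.re =
      ∑ p : Fin d × Fin d, ‖Unitary.conjStarAlgAut ℂ _ (star U) X p.2 p.1‖ ^ 2 *
        ((μ p.1 + r)⁻¹ * (μ p.2 + r)⁻¹) := by
  set Y := Unitary.conjStarAlgAut ℂ _ (star U) X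
  set D : Matrix (Fin d) (Fin d) ℂ := diagonal fun i => ((μ i + r)⁻¹ : ℝ)
  have hX : Unitary.conjStarAlgAut ℂ _ U Y = X := by
    simpa only [Unitary.conjStarAlgAut_symm] using
      (Unitary.conjStarAlgAut ℂ _ U).apply_symm_apply X
  calc (Xᴴ * (σ + (r : ℂ) • 1)⁻¹ * X * (σ + (r : ℂ) • 1)⁻¹).trace.re
      = (Unitary.conjStarAlgAut ℂ _ U (Yᴴ * D * Y * D)).trace.re := by
        rw [inv_add_smul_one_eq_conjStarAlgAut hσ hr, ← hX, ← star_eq_conjTranspose, ← map_star]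
        simp only [map_mul, star_eq_conjTranspose, D]
    _ = _ := by
      rw [trace_conjStarAlgAut, re_trace_conjTranspose_mul_diagonal_mul_mul_diagonal]

lemma bkm_eq_sum_of_eq_conjStarAlgAut {d : ℕ} {σ : Matrix (Fin d) (Fin d) ℂ}
    {U : unitary (Matrix (Fin d) (Fin d) ℂ)} {μ : Fin d → ℝ} (hμ : ∀ i, 0 ≤ μ i)
    (hσ : σ = Unitary.conjStarAlgAut ℂ _ U (diagonal (RCLike.ofReal ∘ μ)))
    (X : Matrix (Fin d) (Fin d) ℂ) :
    bkm σ X = ∑ p : Fin d × Fin d,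
      ENNReal.ofReal (‖Unitary.conjStarAlgAut ℂ _ (star U) X p.2 p.1‖ ^ 2) *
        bkmKernel (μ p.1) (μ p.2) := by
  have hmeas (a b : ℝ) : Measurable fun r : ℝ => ENNReal.ofReal ((a + r)⁻¹ * (b + r)⁻¹) := by
    fun_prop
  simp only [bkmKernel, ← lintegral_const_mul _ (hmeas _ _)]
  rw [← lintegral_finsetSum _ fun p _ => (hmeas _ _).const_mul _]
  refine setLIntegral_congr_fun measurableSet_Ioi fun r (hr : 0 < r) => ?_
  have hpos : ∀ i, 0 < μ i + r := fun i => by linarith [hμ i]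
  rw [re_trace_bkm_integrand_eq hσ X fun i => (hpos i).ne',
    ENNReal.ofReal_sum_of_nonneg fun p _ => by have := hpos p.1; have := hpos p.2; positivity]
  exact Finset.sum_congr rfl fun p _ => ENNReal.ofReal_mul (sq_nonneg _)

theorem traceNorm_sq_le_bkm_general {d : ℕ} (X : Matrix (Fin d) (Fin d) ℂ)
    (hX : X.IsHermitian)
    (σ : Matrix (Fin d) (Fin d) ℂ) (hσ : IsDensity σ) :
    ENNReal.ofReal ((traceNorm X)^2) ≤ bkm σ X := by
  set U := hσ.1.1.eigenvectorUnitary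
  set μ := hσ.1.1.eigenvalues
  have hμ : ∀ i, 0 ≤ μ i := hσ.1.eigenvalues_nonneg
  set Y := Unitary.conjStarAlgAut ℂ _ (star U) X
  obtain ⟨S, hS, hXS⟩ := exists_mem_unitary_traceNorm_le_sum hX (star U)
  have hweights : ∑ p : Fin d × Fin d, ‖S p.1 p.2‖ ^ 2 * ((μ p.1 + μ p.2) / 2) = 1 := by
    rw [sum_norm_sq_mul_mean_of_mem_unitary hS, hσ.sum_eigenvalues_eq_one]
  have hCS := ofReal_sq_sum_mul_le_mul_sum_mul_inv (ι := Fin d × Fin d) (fun p => ‖S p.1 p.2‖)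
    (fun p => ‖Y p.2 p.1‖) (fun p => (μ p.1 + μ p.2) / 2) (fun p => by linarith [hμ p.1, hμ p.2])
    (by rw [hweights]; exact one_pos)
  rw [hweights, ENNReal.ofReal_one, one_mul] at hCS
  calc ENNReal.ofReal (traceNorm X ^ 2)
      ≤ ENNReal.ofReal ((∑ p : Fin d × Fin d, ‖S p.1 p.2‖ * ‖Y p.2 p.1‖) ^ 2) :=
        ENNReal.ofReal_le_ofReal (pow_le_pow_left₀ (traceNorm_nonneg X) hXS 2)
    _ ≤ ∑ p : Fin d × Fin d,
          ENNReal.ofReal (‖Y p.2 p.1‖ ^ 2) * (ENNReal.ofReal ((μ p.1 + μ p.2) / 2))⁻¹ := hCS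
    _ ≤ ∑ p : Fin d × Fin d, ENNReal.ofReal (‖Y p.2 p.1‖ ^ 2) * bkmKernel (μ p.1) (μ p.2) := by
        gcongr with p
        exact inv_ofReal_mean_le_bkmKernel (hμ _) (hμ _)
    _ = bkm σ X := (bkm_eq_sum_of_eq_conjStarAlgAut hμ hσ.1.1.spectral_theorem X).symm

/-- the squared trace norm of a traceless Hermitian matrix lower bounds the
BKM metric at any density matrix. -/
theorem traceNorm_sq_le_bkm {d : ℕ} (X : Matrix (Fin d) (Fin d) ℂ)
    (hX : X.IsHermitian) (hXtr : X.trace = 0)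
    (σ : Matrix (Fin d) (Fin d) ℂ) (hσ : IsDensity σ) :
    ENNReal.ofReal ((traceNorm X)^2) ≤ bkm σ X :=
  traceNorm_sq_le_bkm_general X hX σ hσ

end RDPI
end
end
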